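/- Let T be a partition tree for length-n strings X and Y and let L ≥ 0. Then for every node v and shift s ∈ [−L, L], ED(X_v, Y_{v,s}) ≤ TD^L_{v,s}(X, Y), where TD^L is the L-shift-restricted tree distance. In particular at the root with s = 0, ED(X, Y) ≤ TD^L(X, Y). -/

import Mathlib

/-- Costs for the edit distance (removed from Mathlib; restored with its old meaning). -/
structure Levenshtein.Cost (α β δ : Type*) where
  delete : α → δ
  insert : β → δ
  substitute : α → β → δ

/-- The default unit costs (removed from Mathlib; restored with its old meaning). -/
def Levenshtein.defaultCost {α : Type*} [DecidableEq α] : Levenshtein.Cost α α ℕ where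
  delete _ := 1
  insert _ := 1
  substitute a b := if a = b then 0 else 1

/-- Levenshtein distance (removed from Mathlib; defined by the recursion equations that
Mathlib proved for its old `levenshtein`). -/
def levenshtein {α β δ : Type*} [AddZeroClass δ] [Min δ] (C : Levenshtein.Cost α β δ) :
    List α → List β → δ
  | [], [] => 0
  | [], y :: ys => C.insert y + levenshtein C [] ys
  | x :: xs, [] => C.delete x + levenshtein C xs []
  | x :: xs, y :: ys =>
      min (C.delete x + levenshtein C xs (y :: ys))
        (min (C.insert y + levenshtein C (x :: xs) ys) (C.substitute x y + levenshtein C xs ys))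

/-- Levenshtein edit distance between two lists (unit costs). -/
def ED {α : Type*} [DecidableEq α] (X Y : List α) : ℕ :=
  levenshtein Levenshtein.defaultCost X Y

/-- The fragment `X[a..b)` (with out-of-range indices clamped). -/
def strSlice {α : Type*} (X : List α) (a b : ℕ) : List α := (X.drop a).take (b - a)

/-- The fragment `Y[a..b)` for integer indices (clamped to the valid range). -/
def strSliceZ {α : Type*} (Y : List α) (a b : ℤ) : List α :=
  (Y.drop a.toNat).take (b.toNat - a.toNat)

/-- A (node of a) partition tree: a leaf spans one position, an internal node records
the interval of leaves it spans and its list of children. -/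
inductive PTree where
  | leaf (i : ℕ) : PTree
  | node (lo hi : ℕ) (children : List PTree) : PTree

mutual
/-- Well-formedness: the tree `t` spans exactly the interval `[lo, hi)` of leaves and
the children of each node span consecutive subintervals. -/
inductive PTree.WF : PTree → ℕ → ℕ → Prop where
  | leaf (i : ℕ) : PTree.WF (.leaf i) i (i + 1)
  | node (lo hi : ℕ) (cs : List PTree) (hne : cs ≠ []) (h : PTree.WFs cs lo hi) :
      PTree.WF (.node lo hi cs) lo hi
/-- A list of trees spans consecutive intervals covering `[a, c)`. -/
inductive PTree.WFs : List PTree → ℕ → ℕ → Prop where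
  | nil (a : ℕ) : PTree.WFs [] a a
  | cons (t : PTree) (ts : List PTree) (a b c : ℕ) :
      PTree.WF t a b → PTree.WFs ts b c → PTree.WFs (t :: ts) a c
end

/-- The `L`-shift-restricted tree distance `TD^L_{v,s}`: at a leaf it is the edit distance
of the corresponding (shifted) fragments, at an internal node it is the sum over children
of `min_{s' ∈ [−L,L]} (TD^L_{child,s'} + 2|s − s'|)`. -/
noncomputable def TD {α : Type*} [DecidableEq α] (X Y : List α) (L : ℕ) : PTree → ℤ → ℕ
  | .leaf i, s => ED (strSlice X i (i + 1)) (strSliceZ Y ((i : ℤ) + s) ((i : ℤ) + 1 + s))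
  | .node _ _ cs, s =>
      (cs.attach.map (fun c =>
        (Finset.Icc (-(L : ℤ)) (L : ℤ)).inf'
          ⟨0, by simp⟩
          (fun s' => TD X Y L c.1 s' + 2 * (s - s').natAbs))).sum
termination_by t _ => sizeOf t
decreasing_by
  have := List.sizeOf_lt_of_mem c.2
  simp only [PTree.node.sizeOf_spec]
  omega

/-!
Edit distance is subadditive under concatenation, and moving both ends of a window of `Y` by
`d` changes its edit distance to a fixed string by at most `2d` (each moved end costs at most
one insertion or deletion per position). Hence the optimal shift `s'` chosen for a child costs
at most the penalty `2|s - s'|` relative to the shift `s` of its parent, and induction over the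
tree gives `ED(X_v, Y_{v,s}) ≤ TD^L_{v,s}` for every shift `s`.
-/

section EditDistance

variable {α : Type*} [DecidableEq α]

@[simp]
theorem ED_nil_left (ys : List α) : ED [] ys = ys.length := by
  induction ys with
  | nil => simp [ED, levenshtein]
  | cons y ys ih => simp [ED, levenshtein, Levenshtein.defaultCost] at *; omega

@[simp]
theorem ED_nil_right (xs : List α) : ED xs [] = xs.length := by
  induction xs with
  | nil => simp [ED, levenshtein]
  | cons x xs ih => simp [ED, levenshtein, Levenshtein.defaultCost] at *; omega

theorem ED_cons_cons (x y : α) (xs ys : List α) :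
    ED (x :: xs) (y :: ys) =
      min (1 + ED xs (y :: ys))
        (min (1 + ED (x :: xs) ys) ((if x = y then 0 else 1) + ED xs ys)) := by
  simp [ED, levenshtein, Levenshtein.defaultCost]

theorem ED_cons_left_le (x : α) (xs ys : List α) : ED (x :: xs) ys ≤ 1 + ED xs ys := by
  cases ys with
  | nil => simp [Nat.add_comm]
  | cons y ys => rw [ED_cons_cons]; exact min_le_left _ _

theorem ED_cons_right_le (y : α) (xs ys : List α) : ED xs (y :: ys) ≤ 1 + ED xs ys := by
  cases xs with
  | nil => simp [Nat.add_comm]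
  | cons x xs => rw [ED_cons_cons]; exact (min_le_right _ _).trans (min_le_left _ _)

theorem length_le_ED_add_length : ∀ xs ys : List α, xs.length ≤ ED xs ys + ys.length
  | [], _ => by simp
  | _ :: _, [] => by simp
  | x :: xs, y :: ys => by
      have h₁ := length_le_ED_add_length xs (y :: ys)
      have h₂ := length_le_ED_add_length (x :: xs) ys
      have h₃ := length_le_ED_add_length xs ys
      simp only [ED_cons_cons, List.length_cons] at *
      split <;> omega

theorem ED_append_le : ∀ xs us ys vs : List α, ED (xs ++ us) (ys ++ vs) ≤ ED xs ys + ED us vs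
  | [], us, [], vs => by simp
  | [], us, y :: ys, vs => by
      have h₁ := ED_append_le [] us ys vs
      have h₂ := ED_cons_right_le y us (ys ++ vs)
      simp_all only [List.nil_append, ED_nil_left, List.cons_append, List.length_cons]
      omega
  | x :: xs, us, [], vs => by
      have h₁ := ED_append_le xs us [] vs
      have h₂ := ED_cons_left_le x (xs ++ us) vs
      simp_all only [List.nil_append, ED_nil_right, List.cons_append, List.length_cons]
      omega
  | x :: xs, us, y :: ys, vs => by
      have h₁ := ED_append_le xs us (y :: ys) vs
      have h₂ := ED_append_le (x :: xs) us ys vs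
      have h₃ := ED_append_le xs us ys vs
      simp only [List.cons_append, ED_cons_cons] at *
      omega

theorem ED_le_append_right : ∀ xs ys ts : List α, ED xs ys ≤ ED xs (ys ++ ts) + ts.length
  | [], ys, ts => by simp; omega
  | x :: xs, [], ts => by simpa using length_le_ED_add_length (x :: xs) ts
  | x :: xs, y :: ys, ts => by
      have h₁ := ED_le_append_right xs (y :: ys) ts
      have h₂ := ED_le_append_right (x :: xs) ys ts
      have h₃ := ED_le_append_right xs ys ts
      simp only [List.cons_append, ED_cons_cons] at *
      omega

theorem ED_le_append_left : ∀ xs ys ts : List α, ED xs ys ≤ ED xs (ts ++ ys) + ts.length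
  | _, _, [] => by simp
  | [], ys, ts => by simp; omega
  | x :: xs, ys, t :: ts => by
      have h₁ := ED_le_append_left xs ys (t :: ts)
      have h₂ := ED_le_append_left (x :: xs) ys ts
      have h₃ := ED_le_append_left xs ys ts
      have h₄ := ED_cons_left_le x xs ys
      simp only [List.cons_append, ED_cons_cons, List.length_cons] at *
      omega

theorem ED_take_le (xs ys : List α) (m : ℕ) :
    ED xs (ys.take m) ≤ ED xs ys + (ys.length - m) := by
  simpa using ED_le_append_right xs (ys.take m) (ys.drop m)

theorem ED_le_take (xs ys : List α) (m : ℕ) :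
    ED xs ys ≤ ED xs (ys.take m) + (ys.length - m) := by
  simpa using ED_append_le xs [] (ys.take m) (ys.drop m)

theorem ED_drop_le (xs ys : List α) (k : ℕ) : ED xs (ys.drop k) ≤ ED xs ys + k := by
  have := ED_le_append_left xs (ys.drop k) (ys.take k)
  rw [List.take_append_drop] at this
  have := List.length_take_le k ys
  omega

theorem ED_le_drop (xs ys : List α) (k : ℕ) : ED xs ys ≤ ED xs (ys.drop k) + k := by
  have := ED_append_le [] xs (ys.take k) (ys.drop k)
  simp only [List.nil_append, List.take_append_drop, ED_nil_left] at this
  have := List.length_take_le k ys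
  omega

end EditDistance

section Slices

variable {α : Type*}

theorem strSlice_append (X : List α) {a b c : ℕ} (hab : a ≤ b) (hbc : b ≤ c) :
    strSlice X a c = strSlice X a b ++ strSlice X b c := by
  rw [strSlice, show c - a = (b - a) + (c - b) by omega, List.take_add, List.drop_drop,
    Nat.add_sub_cancel' hab]
  rfl

theorem strSliceZ_append (Y : List α) {a b c : ℤ} (hab : a ≤ b) (hbc : b ≤ c) :
    strSliceZ Y a c = strSliceZ Y a b ++ strSliceZ Y b c :=
  strSlice_append Y (Int.toNat_le_toNat hab) (Int.toNat_le_toNat hbc)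

theorem strSlice_eq_take (Y : List α) (p : ℕ) {q q' : ℕ} (h : q ≤ q') :
    strSlice Y p q = (strSlice Y p q').take (q - p) := by
  rw [strSlice, strSlice, List.take_take, min_eq_left (by omega)]

theorem strSlice_eq_drop (Y : List α) {p p' : ℕ} (q : ℕ) (h : p' ≤ p) :
    strSlice Y p q = (strSlice Y p' q).drop (p - p') := by
  rw [strSlice, strSlice, List.drop_take, List.drop_drop, Nat.add_sub_cancel' h,
    show q - p' - (p - p') = q - p by omega]

theorem length_strSlice_le (Y : List α) (p q : ℕ) : (strSlice Y p q).length ≤ q - p :=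
  List.length_take_le _ _

variable [DecidableEq α]

theorem ED_strSlice_le_right (xs Y : List α) (p q q' : ℕ) :
    ED xs (strSlice Y p q) ≤ ED xs (strSlice Y p q') + (q - q' + (q' - q)) := by
  rcases le_total q q' with h | h
  · have := ED_take_le xs (strSlice Y p q') (q - p)
    have := length_strSlice_le Y p q'
    rw [strSlice_eq_take Y p h]
    omega
  · have := ED_le_take xs (strSlice Y p q) (q' - p)
    rw [← strSlice_eq_take Y p h] at this
    have := length_strSlice_le Y p q
    omega

theorem ED_strSlice_le_left (xs Y : List α) (p p' q : ℕ) :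
    ED xs (strSlice Y p q) ≤ ED xs (strSlice Y p' q) + (p - p' + (p' - p)) := by
  rcases le_total p' p with h | h
  · have := ED_drop_le xs (strSlice Y p' q) (p - p')
    rw [strSlice_eq_drop Y q h]
    omega
  · have := ED_le_drop xs (strSlice Y p q) (p' - p)
    rw [← strSlice_eq_drop Y q h] at this
    omega

theorem ED_strSliceZ_shift_le (xs Y : List α) (a b s s' : ℤ) :
    ED xs (strSliceZ Y (a + s) (b + s)) ≤
      ED xs (strSliceZ Y (a + s') (b + s')) + 2 * (s - s').natAbs := by
  have hl := ED_strSlice_le_left xs Y (a + s).toNat (a + s').toNat (b + s).toNat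
  have hr := ED_strSlice_le_right xs Y (a + s').toNat (b + s).toNat (b + s').toNat
  simp only [strSliceZ, strSlice] at hl hr ⊢
  omega

end Slices

mutual

theorem PTree.WF.le {t : PTree} {lo hi : ℕ} : PTree.WF t lo hi → lo ≤ hi
  | .leaf _ => Nat.le_succ _
  | .node _ _ _ _ h => h.le

theorem PTree.WFs.le {cs : List PTree} {a c : ℕ} : PTree.WFs cs a c → a ≤ c
  | .nil _ => le_rfl
  | .cons _ _ _ _ _ h hs => h.le.trans hs.le

end

section TreeDistance

variable {α : Type*} [DecidableEq α] (X Y : List α) (L : ℕ)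

/-- `TTD^L_{t,s}` in the paper's notation. -/
noncomputable def TTD (t : PTree) (s : ℤ) : ℕ :=
  (Finset.Icc (-(L : ℤ)) L).inf' ⟨0, by simp⟩ fun s' => TD X Y L t s' + 2 * (s - s').natAbs

theorem TD_leaf (i : ℕ) (s : ℤ) :
    TD X Y L (.leaf i) s =
      ED (strSlice X i (i + 1)) (strSliceZ Y ((i : ℤ) + s) (((i + 1 : ℕ) : ℤ) + s)) := by
  rw [TD]
  push_cast
  rfl

theorem TD_node (lo hi : ℕ) (cs : List PTree) (s : ℤ) :
    TD X Y L (.node lo hi cs) s = (cs.map (TTD X Y L · s)).sum := by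
  rw [TD]
  exact congrArg List.sum (List.attach_map_val (l := cs) (f := (TTD X Y L · s)))

theorem ED_le_TTD {t : PTree} {lo hi : ℕ}
    (ht : ∀ s' ∈ Finset.Icc (-(L : ℤ)) L,
      ED (strSlice X lo hi) (strSliceZ Y (lo + s') (hi + s')) ≤ TD X Y L t s') (s : ℤ) :
    ED (strSlice X lo hi) (strSliceZ Y (lo + s) (hi + s)) ≤ TTD X Y L t s :=
  Finset.le_inf' _ _ fun s' hs' =>
    (ED_strSliceZ_shift_le _ Y lo hi s s').trans (Nat.add_le_add_right (ht s' hs') _)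

mutual

theorem PTree.WF.ED_le_TD {t : PTree} {lo hi : ℕ} (h : PTree.WF t lo hi) (s : ℤ) :
    ED (strSlice X lo hi) (strSliceZ Y (lo + s) (hi + s)) ≤ TD X Y L t s :=
  match h with
  | .leaf i => (TD_leaf X Y L i s).ge
  | .node lo hi cs _ hcs => TD_node X Y L lo hi cs s ▸ hcs.ED_le_sum_TTD s

theorem PTree.WFs.ED_le_sum_TTD {cs : List PTree} {a c : ℕ} (h : PTree.WFs cs a c) (s : ℤ) :
    ED (strSlice X a c) (strSliceZ Y (a + s) (c + s)) ≤ (cs.map (TTD X Y L · s)).sum :=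
  match h with
  | .nil a => by simp [strSlice, strSliceZ]
  | .cons t ts a b c ht hts => by
      have hab := ht.le
      have hbc := hts.le
      rw [strSlice_append X hab hbc, strSliceZ_append Y (b := b + s) (by omega) (by omega),
        List.map_cons, List.sum_cons]
      exact (ED_append_le _ _ _ _).trans <| Nat.add_le_add
        (ED_le_TTD X Y L (fun s' _ => ht.ED_le_TD s') s) (hts.ED_le_sum_TTD s)

end

end TreeDistance

/-- Lower bound on the shift-restricted tree distance: for every well-formed (sub)tree `v`
spanning `[lo, hi)` and every shift `s ∈ [−L, L]`, `ED(X_v, Y_{v,s}) ≤ TD^L_{v,s}(X, Y)`;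
in particular, at the root with shift `0`, `ED(X, Y) ≤ TD^L(X, Y)`. -/
theorem ed_le_td {α : Type*} [DecidableEq α] (X Y : List α) (n : ℕ)
    (hX : X.length = n) (hY : Y.length = n) (L : ℕ) :
    (∀ (t : PTree) (lo hi : ℕ), PTree.WF t lo hi → ∀ s : ℤ, -(L : ℤ) ≤ s → s ≤ L →
        ED (strSlice X lo hi) (strSliceZ Y ((lo : ℤ) + s) ((hi : ℤ) + s)) ≤ TD X Y L t s) ∧
      (∀ t : PTree, PTree.WF t 0 n → ED X Y ≤ TD X Y L t 0) := by
  refine ⟨fun t lo hi ht s _ _ => ht.ED_le_TD X Y L s, fun t ht => ?_⟩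
  have hroot := ht.ED_le_TD X Y L 0
  have hXroot : strSlice X 0 n = X := by simp [strSlice, ← hX]
  have hYroot : strSliceZ Y ((0 : ℕ) + 0) (n + 0) = Y := by simp [strSliceZ, ← hY]
  rwa [hXroot, hYroot] at hroot
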